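/- arXiv:1802.08852 — 4 statements merged into one kernel-verified Lean document; each statement's English description precedes it below -/
import Mathlib

section
/- Let E ⊆ A be an operator space, let B be a commutative C*-algebra, let F ⊆ B be an operator space, and let λ be a weight. Then every bounded linear map φ : E → F is λ-cb, and ‖φ‖_{cb}^λ ≤ (sup_n ‖λ_n‖) · ‖φ‖. -/
noncomputable section

namespace WeightedCB

open scoped BigOperators

/-- Applying a matrix of bounded operators on `H` to a vector of `ℓ²(ι, H)`. -/
def opMatApply {H : Type*} [NormedAddCommGroup H] [InnerProductSpace ℂ H]
    {ι : Type*} [Fintype ι] (e : Matrix ι ι (H →L[ℂ] H))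
    (v : PiLp 2 fun _ : ι => H) : PiLp 2 fun _ : ι => H :=
  (WithLp.equiv 2 (∀ _ : ι, H)).symm fun i => ∑ j, e i j ((WithLp.equiv 2 (∀ _ : ι, H)) v j)

/-- The C*-norm of a matrix over `B(H)`: the operator norm of the induced operator
on `ℓ²(ι, H)`.  This realizes the norm of the C*-algebra `Mₙ(B(H)) = B(Hⁿ)`. -/
def opMatNorm {H : Type*} [NormedAddCommGroup H] [InnerProductSpace ℂ H]
    {ι : Type*} [Fintype ι] (e : Matrix ι ι (H →L[ℂ] H)) : ℝ :=
  sInf {C : ℝ | 0 ≤ C ∧ ∀ v : PiLp 2 (fun _ : ι => H), ‖opMatApply e v‖ ≤ C * ‖v‖}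

/-- A scalar (possibly rectangular) matrix acting on Euclidean space. -/
def cMatApply {ι κ : Type*} [Fintype ι] [Fintype κ] (a : Matrix ι κ ℂ)
    (v : EuclideanSpace ℂ κ) : EuclideanSpace ℂ ι :=
  (WithLp.equiv 2 (ι → ℂ)).symm (a.mulVec ((WithLp.equiv 2 (κ → ℂ)) v))

/-- The C*-norm (i.e. the operator norm `ℓ²(κ) → ℓ²(ι)`) of a scalar matrix. -/
def cMatNorm {ι κ : Type*} [Fintype ι] [Fintype κ] (a : Matrix ι κ ℂ) : ℝ :=
  sInf {C : ℝ | 0 ≤ C ∧ ∀ v : EuclideanSpace ℂ κ, ‖cMatApply a v‖ ≤ C * ‖v‖}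

/-- A weight: a uniformly bounded sequence of nonzero linear maps `λₙ : Mₙ(ℂ) → Mₙ(ℂ)`,
indexed so that `map n` acts on `(n+1) × (n+1)` matrices (sizes `n + 1 ≥ 1`). -/
structure Weight where
  map : ∀ n : ℕ, Matrix (Fin (n + 1)) (Fin (n + 1)) ℂ →ₗ[ℂ] Matrix (Fin (n + 1)) (Fin (n + 1)) ℂ
  nonzero : ∀ n, map n ≠ 0
  bounded : ∃ C : ℝ, 0 ≤ C ∧ ∀ n a, cMatNorm (map n a) ≤ C * cMatNorm a

/-- `sup_n ‖λₙ‖`, expressed as the least uniform bound for the weight. -/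
def weightBound (lam : Weight) : ℝ :=
  sInf {C : ℝ | 0 ≤ C ∧ ∀ n a, cMatNorm (lam.map n a) ≤ C * cMatNorm a}

/-- The weighted amplification `φ ⊗ λₙ` of a map `φ`, applied to a matrix `e`:
its `(k, l)` entry is `∑ i j, (λₙ(ε i j)) k l • φ (e i j)`. -/
def wAmp {E W : Type*} [AddCommMonoid W] [Module ℂ W] (lam : Weight) (φ : E → W) {n : ℕ}
    (e : Matrix (Fin (n + 1)) (Fin (n + 1)) E) : Matrix (Fin (n + 1)) (Fin (n + 1)) W :=
  Matrix.of fun k l => ∑ i, ∑ j, (lam.map n (Matrix.single i j 1)) k l • φ (e i j)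

/-- The canonical identification `M_ι(M_κ(W)) = M_{ι × κ}(W)`. -/
def flatten {ι κ W : Type*} (X : Matrix ι ι (Matrix κ κ W)) : Matrix (ι × κ) (ι × κ) W :=
  Matrix.of fun p q => X p.1 q.1 p.2 q.2

section OperatorSpaces

variable {H₁ H₂ H₃ : Type*}
  [NormedAddCommGroup H₁] [InnerProductSpace ℂ H₁]
  [NormedAddCommGroup H₂] [InnerProductSpace ℂ H₂]
  [NormedAddCommGroup H₃] [InnerProductSpace ℂ H₃]

/-- The norm of a matrix with entries in the operator space `E ⊆ B(H₁)`, namely its norm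
as an element of the C*-algebra `M_ι(B(H₁))`. -/
def subNorm {E : Submodule ℂ (H₁ →L[ℂ] H₁)} {ι : Type*} [Fintype ι]
    (e : Matrix ι ι ↥E) : ℝ :=
  opMatNorm (e.map ((↑) : ↥E → (H₁ →L[ℂ] H₁)))

/-- `φ : E → B(H₂)` is completely bounded: its amplifications are uniformly bounded. -/
def IsCB {E : Submodule ℂ (H₁ →L[ℂ] H₁)} (φ : ↥E → (H₂ →L[ℂ] H₂)) : Prop :=
  ∃ C : ℝ, 0 ≤ C ∧ ∀ (n : ℕ) (e : Matrix (Fin (n + 1)) (Fin (n + 1)) ↥E),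
    opMatNorm (e.map φ) ≤ C * subNorm e

/-- The completely bounded norm `‖φ‖_cb = sup_n ‖φ⁽ⁿ⁾‖`, as the least uniform bound. -/
def cbNorm {E : Submodule ℂ (H₁ →L[ℂ] H₁)} (φ : ↥E → (H₂ →L[ℂ] H₂)) : ℝ :=
  sInf {C : ℝ | 0 ≤ C ∧ ∀ (n : ℕ) (e : Matrix (Fin (n + 1)) (Fin (n + 1)) ↥E),
    opMatNorm (e.map φ) ≤ C * subNorm e}

/-- `φ : E → B(H₂)` is weighted completely bounded (λ-cb) for the weight `lam`. -/
def IsWeightedCB {E : Submodule ℂ (H₁ →L[ℂ] H₁)} (lam : Weight)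
    (φ : ↥E → (H₂ →L[ℂ] H₂)) : Prop :=
  ∃ C : ℝ, 0 ≤ C ∧ ∀ (n : ℕ) (e : Matrix (Fin (n + 1)) (Fin (n + 1)) ↥E),
    opMatNorm (wAmp lam φ e) ≤ C * subNorm e

/-- The weighted cb norm `‖φ‖_cb^λ = sup_n ‖φ ⊗ λₙ‖`, as the least uniform bound. -/
def weightedCbNorm {E : Submodule ℂ (H₁ →L[ℂ] H₁)} (lam : Weight)
    (φ : ↥E → (H₂ →L[ℂ] H₂)) : ℝ :=
  sInf {C : ℝ | 0 ≤ C ∧ ∀ (n : ℕ) (e : Matrix (Fin (n + 1)) (Fin (n + 1)) ↥E),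
    opMatNorm (wAmp lam φ e) ≤ C * subNorm e}

/-- λ-cb for scalar valued maps `φ : E → ℂ`, where `φ ⊗ λₙ` is valued in `Mₙ(ℂ)`. -/
def IsWeightedCBFun {E : Submodule ℂ (H₁ →L[ℂ] H₁)} (lam : Weight) (φ : ↥E → ℂ) : Prop :=
  ∃ C : ℝ, 0 ≤ C ∧ ∀ (n : ℕ) (e : Matrix (Fin (n + 1)) (Fin (n + 1)) ↥E),
    cMatNorm (wAmp lam φ e) ≤ C * subNorm e

/-- The weighted cb norm for scalar valued maps. -/
def weightedCbNormFun {E : Submodule ℂ (H₁ →L[ℂ] H₁)} (lam : Weight) (φ : ↥E → ℂ) : ℝ :=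
  sInf {C : ℝ | 0 ≤ C ∧ ∀ (n : ℕ) (e : Matrix (Fin (n + 1)) (Fin (n + 1)) ↥E),
    cMatNorm (wAmp lam φ e) ≤ C * subNorm e}

/-- λ-cb for matrix valued maps `φ : E → M_κ(B(H₂))`, using the identification
`Mₙ(M_κ(B(H₂))) = M_{n × κ}(B(H₂))`. -/
def IsWeightedCBMat {E : Submodule ℂ (H₁ →L[ℂ] H₁)} {κ : Type*} [Fintype κ] (lam : Weight)
    (φ : ↥E → Matrix κ κ (H₂ →L[ℂ] H₂)) : Prop :=
  ∃ C : ℝ, 0 ≤ C ∧ ∀ (n : ℕ) (e : Matrix (Fin (n + 1)) (Fin (n + 1)) ↥E),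
    opMatNorm (flatten (wAmp lam φ e)) ≤ C * subNorm e

/-- The weighted cb norm for matrix valued maps. -/
def weightedCbNormMat {E : Submodule ℂ (H₁ →L[ℂ] H₁)} {κ : Type*} [Fintype κ] (lam : Weight)
    (φ : ↥E → Matrix κ κ (H₂ →L[ℂ] H₂)) : ℝ :=
  sInf {C : ℝ | 0 ≤ C ∧ ∀ (n : ℕ) (e : Matrix (Fin (n + 1)) (Fin (n + 1)) ↥E),
    opMatNorm (flatten (wAmp lam φ e)) ≤ C * subNorm e}

end OperatorSpaces

/-- A bilinear weight: a uniformly bounded, not identically zero, sequence of bilinear maps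
`λₙ : Mₙ(ℂ) × Mₙ(ℂ) → M_{k(n)}(ℂ)` (sizes `n + 1 ≥ 1`). -/
structure BilWeight where
  k : ℕ → ℕ
  map : ∀ n : ℕ, Matrix (Fin (n + 1)) (Fin (n + 1)) ℂ →ₗ[ℂ]
    (Matrix (Fin (n + 1)) (Fin (n + 1)) ℂ →ₗ[ℂ] Matrix (Fin (k n)) (Fin (k n)) ℂ)
  bounded : ∃ C : ℝ, 0 ≤ C ∧ ∀ n a b, cMatNorm (map n a b) ≤ C * (cMatNorm a * cMatNorm b)
  nonzero : ∃ n, map n ≠ 0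

/-- The bilinear amplification `φₙ` of a bilinear map `φ`: its `(p, q)` entry is
`∑ i j s t, (λₙ(ε i j, ε s t)) p q • φ (e i j) (f s t)`. -/
def bAmp {E F W : Type*} [AddCommMonoid W] [Module ℂ W] (lam : BilWeight)
    (φ : E → F → W) {n : ℕ} (e : Matrix (Fin (n + 1)) (Fin (n + 1)) E)
    (f : Matrix (Fin (n + 1)) (Fin (n + 1)) F) :
    Matrix (Fin (lam.k n)) (Fin (lam.k n)) W :=
  Matrix.of fun p q => ∑ i, ∑ j, ∑ s, ∑ t,
    (lam.map n (Matrix.single i j 1) (Matrix.single s t 1)) p q •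
      φ (e i j) (f s t)

section Bilinear

variable {H₁ H₂ H₃ : Type*}
  [NormedAddCommGroup H₁] [InnerProductSpace ℂ H₁]
  [NormedAddCommGroup H₂] [InnerProductSpace ℂ H₂]
  [NormedAddCommGroup H₃] [InnerProductSpace ℂ H₃]

/-- A bilinear map `φ : E × F → B(H₃)` is completely λ-bounded. -/
def IsBilCB {E : Submodule ℂ (H₁ →L[ℂ] H₁)} {F : Submodule ℂ (H₂ →L[ℂ] H₂)}
    (lam : BilWeight) (φ : ↥E → ↥F → (H₃ →L[ℂ] H₃)) : Prop :=
  ∃ C : ℝ, 0 ≤ C ∧ ∀ (n : ℕ) (e : Matrix (Fin (n + 1)) (Fin (n + 1)) ↥E)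
    (f : Matrix (Fin (n + 1)) (Fin (n + 1)) ↥F),
    opMatNorm (bAmp lam φ e f) ≤ C * (subNorm e * subNorm f)

/-- The completely λ-bounded norm `‖φ‖_λ = sup_n ‖φₙ‖` of a bilinear map. -/
def bilCbNorm {E : Submodule ℂ (H₁ →L[ℂ] H₁)} {F : Submodule ℂ (H₂ →L[ℂ] H₂)}
    (lam : BilWeight) (φ : ↥E → ↥F → (H₃ →L[ℂ] H₃)) : ℝ :=
  sInf {C : ℝ | 0 ≤ C ∧ ∀ (n : ℕ) (e : Matrix (Fin (n + 1)) (Fin (n + 1)) ↥E)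
    (f : Matrix (Fin (n + 1)) (Fin (n + 1)) ↥F),
    opMatNorm (bAmp lam φ e f) ≤ C * (subNorm e * subNorm f)}

/-- Completely λ-bounded, for matrix valued bilinear maps `φ : E × F → M_κ(B(H₃))`. -/
def IsBilCBMat {E : Submodule ℂ (H₁ →L[ℂ] H₁)} {F : Submodule ℂ (H₂ →L[ℂ] H₂)}
    {κ : Type*} [Fintype κ] (lam : BilWeight)
    (φ : ↥E → ↥F → Matrix κ κ (H₃ →L[ℂ] H₃)) : Prop :=
  ∃ C : ℝ, 0 ≤ C ∧ ∀ (n : ℕ) (e : Matrix (Fin (n + 1)) (Fin (n + 1)) ↥E)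
    (f : Matrix (Fin (n + 1)) (Fin (n + 1)) ↥F),
    opMatNorm (flatten (bAmp lam φ e f)) ≤ C * (subNorm e * subNorm f)

/-- The completely λ-bounded norm, for matrix valued bilinear maps. -/
def bilCbNormMat {E : Submodule ℂ (H₁ →L[ℂ] H₁)} {F : Submodule ℂ (H₂ →L[ℂ] H₂)}
    {κ : Type*} [Fintype κ] (lam : BilWeight)
    (φ : ↥E → ↥F → Matrix κ κ (H₃ →L[ℂ] H₃)) : ℝ :=
  sInf {C : ℝ | 0 ≤ C ∧ ∀ (n : ℕ) (e : Matrix (Fin (n + 1)) (Fin (n + 1)) ↥E)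
    (f : Matrix (Fin (n + 1)) (Fin (n + 1)) ↥F),
    opMatNorm (flatten (bAmp lam φ e f)) ≤ C * (subNorm e * subNorm f)}

end Bilinear

/-- A star algebra equivalence, as a star algebra homomorphism. -/
def eqvHom {A B : Type*} [Semiring A] [Semiring B] [Algebra ℂ A] [Algebra ℂ B]
    [Star A] [Star B] (g : A ≃⋆ₐ[ℂ] B) : A →⋆ₐ[ℂ] B :=
  { toFun := g
    map_one' := map_one g
    map_mul' := map_mul g
    map_zero' := map_zero g
    map_add' := map_add g
    commutes' := fun r => by
      show g (algebraMap ℂ A r) = algebraMap ℂ B r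
      rw [Algebra.algebraMap_eq_smul_one, Algebra.algebraMap_eq_smul_one, map_smul, map_one]
    map_star' := map_star g }

end WeightedCB


namespace WeightedCB

open scoped Matrix.Norms.L2Operator

set_option maxHeartbeats 1600000
set_option synthInstance.maxHeartbeats 1000000

section RealAux

lemma auxSet_sInf_nonneg {S : Set ℝ} (h0 : ∀ C ∈ S, 0 ≤ C) (hne : S.Nonempty) :
    0 ≤ sInf S :=
  le_csInf hne h0

lemma auxSet_le_sInf_mul {S : Set ℝ} (h0 : ∀ C ∈ S, 0 ≤ C) (hne : S.Nonempty)
    {x r : ℝ} (hr : 0 ≤ r) (hx : ∀ C ∈ S, x ≤ C * r) : x ≤ sInf S * r := by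
  rcases hr.eq_or_lt with h | h
  · obtain ⟨C, hC⟩ := hne
    simpa [← h] using hx C hC
  · rw [← div_le_iff₀ h]
    exact le_csInf hne fun C hC => (div_le_iff₀ h).2 (hx C hC)

lemma auxSet_sInf_le {S : Set ℝ} (h0 : ∀ C ∈ S, 0 ≤ C) {C : ℝ} (hC : C ∈ S) : sInf S ≤ C :=
  csInf_le ⟨0, fun x hx => h0 x hx⟩ hC

end RealAux

section PiLpAux

variable {ι : Type*} [Fintype ι]

lemma piLp2_apply_norm_le {V : ι → Type*} [∀ i, NormedAddCommGroup (V i)]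
    (w : PiLp 2 V) (k : ι) : ‖w k‖ ≤ ‖w‖ := by
  rw [PiLp.norm_eq_of_L2]
  calc ‖w k‖ = Real.sqrt (‖w k‖ ^ 2) := (Real.sqrt_sq (norm_nonneg _)).symm
  _ ≤ _ := Real.sqrt_le_sqrt <| Finset.single_le_sum
      (f := fun i => ‖w i‖ ^ 2) (fun i _ => by positivity) (Finset.mem_univ k)

lemma piLp2_norm_le_sum_norm {V : ι → Type*} [∀ i, NormedAddCommGroup (V i)]
    (w : PiLp 2 V) : ‖w‖ ≤ ∑ k, ‖w k‖ := by
  rw [PiLp.norm_eq_of_L2]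
  have h1 : ∑ i, ‖w i‖ ^ 2 ≤ (∑ i, ‖w i‖) ^ 2 :=
    Finset.sum_sq_le_sq_sum_of_nonneg fun i _ => norm_nonneg _
  calc Real.sqrt (∑ i, ‖w i‖ ^ 2) ≤ Real.sqrt ((∑ i, ‖w i‖) ^ 2) := Real.sqrt_le_sqrt h1
  _ = ∑ i, ‖w i‖ := Real.sqrt_sq (Finset.sum_nonneg fun i _ => norm_nonneg _)

lemma cauchySchwarz_sum (f g : ι → ℝ) :
    ∑ i, f i * g i ≤ Real.sqrt (∑ i, f i ^ 2) * Real.sqrt (∑ i, g i ^ 2) := by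
  have h := real_inner_le_norm
    ((WithLp.equiv 2 (ι → ℝ)).symm f) ((WithLp.equiv 2 (ι → ℝ)).symm g)
  rw [EuclideanSpace.norm_eq, EuclideanSpace.norm_eq] at h
  simp only [PiLp.inner_apply, RCLike.inner_apply, starRingEnd_apply, star_trivial,
    WithLp.equiv_symm_apply, WithLp.ofLp_toLp, Real.norm_eq_abs, sq_abs] at h
  exact (Finset.sum_congr rfl fun i _ => mul_comm (f i) (g i)).trans_le h

end PiLpAux

section OpAux

variable {H : Type*} [NormedAddCommGroup H] [InnerProductSpace ℂ H]
variable {ι : Type*} [Fintype ι]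

lemma opMatApply_apply (a : Matrix ι ι (H →L[ℂ] H)) (v : PiLp 2 fun _ : ι => H) (k : ι) :
    opMatApply a v k = ∑ l, a k l (v l) := rfl

lemma opMatApply_bound (a : Matrix ι ι (H →L[ℂ] H)) (v : PiLp 2 fun _ : ι => H) :
    ‖opMatApply a v‖ ≤ (∑ k, ∑ l, ‖a k l‖) * ‖v‖ := by
  calc ‖opMatApply a v‖ ≤ ∑ k, ‖opMatApply a v k‖ := piLp2_norm_le_sum_norm _
  _ ≤ ∑ k, ∑ l, ‖a k l‖ * ‖v‖ := by
      refine Finset.sum_le_sum fun k _ => ?_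
      rw [opMatApply_apply]
      refine (norm_sum_le _ _).trans (Finset.sum_le_sum fun l _ => ?_)
      exact ((a k l).le_opNorm _).trans
        (mul_le_mul_of_nonneg_left (piLp2_apply_norm_le v l) (norm_nonneg _))
  _ = (∑ k, ∑ l, ‖a k l‖) * ‖v‖ := by rw [Finset.sum_mul]; simp [Finset.sum_mul]

lemma opMatNorm_set_nonempty (a : Matrix ι ι (H →L[ℂ] H)) :
    {C : ℝ | 0 ≤ C ∧ ∀ v : PiLp 2 (fun _ : ι => H), ‖opMatApply a v‖ ≤ C * ‖v‖}.Nonempty :=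
  ⟨∑ k, ∑ l, ‖a k l‖, Finset.sum_nonneg fun _ _ => Finset.sum_nonneg fun _ _ => norm_nonneg _,
    opMatApply_bound a⟩

lemma opMatNorm_nonneg (a : Matrix ι ι (H →L[ℂ] H)) : 0 ≤ opMatNorm a :=
  auxSet_sInf_nonneg (fun _ hC => hC.1) (opMatNorm_set_nonempty a)

lemma opMatApply_le_opMatNorm (a : Matrix ι ι (H →L[ℂ] H)) (v : PiLp 2 fun _ : ι => H) :
    ‖opMatApply a v‖ ≤ opMatNorm a * ‖v‖ :=
  auxSet_le_sInf_mul (fun _ hC => hC.1) (opMatNorm_set_nonempty a) (norm_nonneg v)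
    (fun _ hC => hC.2 v)

lemma opMatNorm_le {a : Matrix ι ι (H →L[ℂ] H)} {C : ℝ} (h0 : 0 ≤ C)
    (h : ∀ v : PiLp 2 (fun _ : ι => H), ‖opMatApply a v‖ ≤ C * ‖v‖) : opMatNorm a ≤ C :=
  auxSet_sInf_le (fun _ hC => hC.1) ⟨h0, h⟩

lemma cMatApply_apply {κ : Type*} [Fintype κ] (a : Matrix ι κ ℂ) (v : EuclideanSpace ℂ κ)
    (i : ι) : cMatApply a v i = ∑ j, a i j * v j := rfl

lemma cMatApply_bound {κ : Type*} [Fintype κ] (a : Matrix ι κ ℂ) (v : EuclideanSpace ℂ κ) :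
    ‖cMatApply a v‖ ≤ (∑ i, ∑ j, ‖a i j‖) * ‖v‖ := by
  calc ‖cMatApply a v‖ ≤ ∑ i, ‖cMatApply a v i‖ := piLp2_norm_le_sum_norm _
  _ ≤ ∑ i, ∑ j, ‖a i j‖ * ‖v‖ := by
      refine Finset.sum_le_sum fun i _ => ?_
      rw [cMatApply_apply]
      refine (norm_sum_le _ _).trans (Finset.sum_le_sum fun j _ => ?_)
      rw [norm_mul]
      exact mul_le_mul_of_nonneg_left (piLp2_apply_norm_le v j) (norm_nonneg _)
  _ = (∑ i, ∑ j, ‖a i j‖) * ‖v‖ := by rw [Finset.sum_mul]; simp [Finset.sum_mul]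

lemma cMatNorm_set_nonempty {κ : Type*} [Fintype κ] (a : Matrix ι κ ℂ) :
    {C : ℝ | 0 ≤ C ∧ ∀ v : EuclideanSpace ℂ κ, ‖cMatApply a v‖ ≤ C * ‖v‖}.Nonempty :=
  ⟨∑ i, ∑ j, ‖a i j‖, Finset.sum_nonneg fun _ _ => Finset.sum_nonneg fun _ _ => norm_nonneg _,
    cMatApply_bound a⟩

lemma cMatNorm_nonneg {κ : Type*} [Fintype κ] (a : Matrix ι κ ℂ) : 0 ≤ cMatNorm a :=
  auxSet_sInf_nonneg (fun _ hC => hC.1) (cMatNorm_set_nonempty a)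

lemma cMatApply_le_cMatNorm {κ : Type*} [Fintype κ] (a : Matrix ι κ ℂ)
    (v : EuclideanSpace ℂ κ) : ‖cMatApply a v‖ ≤ cMatNorm a * ‖v‖ :=
  auxSet_le_sInf_mul (fun _ hC => hC.1) (cMatNorm_set_nonempty a) (norm_nonneg v)
    (fun _ hC => hC.2 v)

lemma cMatNorm_le {κ : Type*} [Fintype κ] {a : Matrix ι κ ℂ} {C : ℝ} (h0 : 0 ≤ C)
    (h : ∀ v : EuclideanSpace ℂ κ, ‖cMatApply a v‖ ≤ C * ‖v‖) : cMatNorm a ≤ C :=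
  auxSet_sInf_le (fun _ hC => hC.1) ⟨h0, h⟩

lemma l2OpNorm_le_cMatNorm [DecidableEq ι] (a : Matrix ι ι ℂ) : ‖a‖ ≤ cMatNorm a := by
  rw [Matrix.cstar_norm_def]
  refine ContinuousLinearMap.opNorm_le_bound _ (cMatNorm_nonneg a) fun x => ?_
  have hx : Matrix.toEuclideanCLM (n := ι) (𝕜 := ℂ) a x = cMatApply a x := by
    have := Matrix.toEuclideanCLM_toLp (n := ι) (𝕜 := ℂ) a
      ((WithLp.equiv 2 (ι → ℂ)) x)
    simpa [cMatApply, Matrix.toLin'_apply] using this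
  rw [hx]
  exact cMatApply_le_cMatNorm a x

end OpAux

section WeightAux

lemma weightBound_nonneg (lam : Weight) : 0 ≤ weightBound lam :=
  auxSet_sInf_nonneg (fun _ hC => hC.1) lam.bounded

lemma weightBound_spec (lam : Weight) (n : ℕ)
    (a : Matrix (Fin (n + 1)) (Fin (n + 1)) ℂ) :
    cMatNorm (lam.map n a) ≤ weightBound lam * cMatNorm a :=
  auxSet_le_sInf_mul (fun _ hC => hC.1) lam.bounded (cMatNorm_nonneg a)
    (fun _ hC => hC.2 n a)

end WeightAux

section OpCLM

/-- `PiLp` of complete spaces is complete. -/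
instance piLp_completeSpace {ι : Type*} [Fintype ι] {V : ι → Type*}
    [∀ i, UniformSpace (V i)] [∀ i, CompleteSpace (V i)] : CompleteSpace (PiLp 2 V) := by
  let u : PiLp 2 V ≃ᵤ (∀ i, V i) :=
    { toEquiv := WithLp.equiv 2 (∀ i, V i)
      uniformContinuous_toFun := PiLp.uniformContinuous_ofLp 2 V
      uniformContinuous_invFun := PiLp.uniformContinuous_toLp 2 V }
  exact u.completeSpace_iff.2 inferInstance

variable {H : Type*} [NormedAddCommGroup H] [InnerProductSpace ℂ H]
variable {ι : Type*} [Fintype ι]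

/-- `opMatApply` as a continuous linear map. -/
def opCLM (a : Matrix ι ι (H →L[ℂ] H)) :
    (PiLp 2 fun _ : ι => H) →L[ℂ] PiLp 2 fun _ : ι => H :=
  LinearMap.mkContinuous
    { toFun := opMatApply a
      map_add' := fun v w => by
        refine PiLp.ext fun k => ?_
        simp only [opMatApply_apply, PiLp.add_apply, map_add, Finset.sum_add_distrib]
      map_smul' := fun c v => by
        refine PiLp.ext fun k => ?_
        simp only [opMatApply_apply, PiLp.smul_apply, map_smul, RingHom.id_apply,
          Finset.smul_sum] }
    (∑ k, ∑ l, ‖a k l‖) (opMatApply_bound a)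

lemma opCLM_apply (a : Matrix ι ι (H →L[ℂ] H)) (v : PiLp 2 fun _ : ι => H) :
    opCLM a v = opMatApply a v := rfl

lemma opCLM_one [DecidableEq ι] : opCLM (1 : Matrix ι ι (H →L[ℂ] H)) = 1 := by
  refine ContinuousLinearMap.ext fun v => PiLp.ext fun k => ?_
  have h : ∀ x, ((if k = x then (1 : H →L[ℂ] H) else 0)) (v x) = if k = x then v x else 0 :=
    fun x => by split_ifs <;> simp
  simp [opCLM_apply, opMatApply_apply, Matrix.one_apply, h]

lemma opCLM_mul [DecidableEq ι] (a b : Matrix ι ι (H →L[ℂ] H)) :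
    opCLM (a * b) = opCLM a * opCLM b := by
  refine ContinuousLinearMap.ext fun v => PiLp.ext fun k => ?_
  show opMatApply (a * b) v k = opMatApply a (opMatApply b v) k
  simp only [opMatApply_apply, Matrix.mul_apply, ContinuousLinearMap.sum_apply,
    ContinuousLinearMap.mul_apply, map_sum]
  exact Finset.sum_comm

lemma opCLM_smul (c : ℂ) (a : Matrix ι ι (H →L[ℂ] H)) : opCLM (c • a) = c • opCLM a := by
  refine ContinuousLinearMap.ext fun v => PiLp.ext fun k => ?_
  show opMatApply (c • a) v k = (c • (opCLM a v)) k
  simp only [opMatApply_apply, Matrix.smul_apply, ContinuousLinearMap.smul_apply,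
    PiLp.smul_apply, opCLM_apply, Finset.smul_sum]

lemma opCLM_star [CompleteSpace H] [DecidableEq ι] (a : Matrix ι ι (H →L[ℂ] H)) :
    opCLM (star a) = star (opCLM a) := by
  rw [ContinuousLinearMap.star_eq_adjoint, ContinuousLinearMap.eq_adjoint_iff]
  intro x y
  show (inner ℂ (opMatApply (star a) x) y : ℂ) = inner ℂ x (opMatApply a y)
  simp only [PiLp.inner_apply, opMatApply_apply, sum_inner, inner_sum, Matrix.star_apply,
    ContinuousLinearMap.star_eq_adjoint, ContinuousLinearMap.adjoint_inner_left]
  exact Finset.sum_comm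

/-- The canonical embedding `Mₙ(B(H)) → B(Hⁿ)` as a star algebra homomorphism. -/
def opT [CompleteSpace H] [DecidableEq ι] :
    Matrix ι ι (H →L[ℂ] H) →⋆ₐ[ℂ] ((PiLp 2 fun _ : ι => H) →L[ℂ] PiLp 2 fun _ : ι => H) where
  toFun := opCLM
  map_one' := opCLM_one
  map_mul' := opCLM_mul
  map_zero' := by
    refine ContinuousLinearMap.ext fun v => PiLp.ext fun k => ?_
    simp [opCLM_apply, opMatApply_apply]
  map_add' a b := by
    refine ContinuousLinearMap.ext fun v => PiLp.ext fun k => ?_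
    show opMatApply (a + b) v k = (opCLM a v + opCLM b v) k
    simp only [opMatApply_apply, Matrix.add_apply, ContinuousLinearMap.add_apply,
      PiLp.add_apply, opCLM_apply, Finset.sum_add_distrib]
  commutes' r := by
    show opCLM ((algebraMap ℂ (Matrix ι ι (H →L[ℂ] H))) r) = (algebraMap ℂ _) r
    rw [Algebra.algebraMap_eq_smul_one, Algebra.algebraMap_eq_smul_one, opCLM_smul, opCLM_one]
  map_star' := opCLM_star

end OpCLM

section EntryCM

open scoped Matrix.Norms.L2Operator

noncomputable instance matrixCStarAlgebra {ι : Type*} [Fintype ι] [DecidableEq ι] :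
    CStarAlgebra (Matrix ι ι ℂ) := Matrix.instCStarAlgebra

variable {X : Type*} [TopologicalSpace X] {ι : Type*} [Fintype ι] [DecidableEq ι]

/-- The `(k, l)` entry of a continuous matrix-valued function, as a continuous function. -/
def entryCM (f : C(X, Matrix ι ι ℂ)) (k l : ι) : C(X, ℂ) :=
  ⟨fun x => f x k l, by
    have hL : Continuous fun M : Matrix ι ι ℂ => M k l := by
      let L : Matrix ι ι ℂ →ₗ[ℂ] ℂ :=
        { toFun := fun M => M k l, map_add' := fun _ _ => rfl, map_smul' := fun _ _ => rfl }
      exact L.continuous_of_finiteDimensional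
    exact hL.comp f.continuous⟩

variable {S : Type*} [Semiring S] [StarRing S] [Algebra ℂ S]

/-- The entrywise application of a star algebra homomorphism `C(X, ℂ) → S`, as a
star algebra homomorphism `C(X, Mₙ(ℂ)) → Mₙ(S)`. -/
def cmToMat (u : C(X, ℂ) →⋆ₐ[ℂ] S) : C(X, Matrix ι ι ℂ) →⋆ₐ[ℂ] Matrix ι ι S where
  toFun f := Matrix.of fun k l => u (entryCM f k l)
  map_one' := by
    refine Matrix.ext fun k l => ?_
    have h : entryCM (1 : C(X, Matrix ι ι ℂ)) k l = if k = l then 1 else 0 := by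
      refine ContinuousMap.ext fun x => ?_
      by_cases hkl : k = l <;> simp [entryCM, Matrix.one_apply, hkl]
    simp only [Matrix.of_apply, h, Matrix.one_apply]
    split_ifs <;> simp
  map_mul' f g := by
    refine Matrix.ext fun k l => ?_
    have h : entryCM (f * g) k l = ∑ m, entryCM f k m * entryCM g m l := by
      refine ContinuousMap.ext fun x => ?_
      simp [entryCM, Matrix.mul_apply]
    simp only [Matrix.of_apply, Matrix.mul_apply, h, map_sum]
    exact Finset.sum_congr rfl fun m _ => map_mul u _ _
  map_zero' := by
    refine Matrix.ext fun k l => ?_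
    have h : entryCM (0 : C(X, Matrix ι ι ℂ)) k l = 0 := ContinuousMap.ext fun x => rfl
    simp only [Matrix.of_apply, h, map_zero, Matrix.zero_apply]
  map_add' f g := by
    refine Matrix.ext fun k l => ?_
    have h : entryCM (f + g) k l = entryCM f k l + entryCM g k l := ContinuousMap.ext fun x => rfl
    simp only [Matrix.of_apply, h, map_add, Matrix.add_apply]
  commutes' r := by
    refine Matrix.ext fun k l => ?_
    have h : entryCM ((algebraMap ℂ C(X, Matrix ι ι ℂ)) r) k l
        = if k = l then (algebraMap ℂ C(X, ℂ)) r else 0 := by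
      refine ContinuousMap.ext fun x => ?_
      have hx : ((algebraMap ℂ C(X, Matrix ι ι ℂ)) r) x = (algebraMap ℂ (Matrix ι ι ℂ)) r := by
        rw [Algebra.algebraMap_eq_smul_one, Algebra.algebraMap_eq_smul_one]
        rfl
      by_cases hkl : k = l <;>
        simp [entryCM, hx, Matrix.algebraMap_matrix_apply, hkl, Algebra.algebraMap_self_apply,
          Algebra.algebraMap_eq_smul_one]
    simp only [Matrix.of_apply, h, Matrix.algebraMap_matrix_apply]
    split_ifs
    · exact AlgHomClass.commutes u r
    · exact map_zero u
  map_star' f := by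
    refine Matrix.ext fun k l => ?_
    have h : entryCM (star f) k l = star (entryCM f l k) := by
      refine ContinuousMap.ext fun x => ?_
      simp [entryCM, Matrix.star_apply]
    simp only [Matrix.of_apply, Matrix.star_apply, h, map_star]

end EntryCM

section FunctionalCB

variable {H₁ : Type*} [NormedAddCommGroup H₁] [InnerProductSpace ℂ H₁]

/-- Scalar-valued bounded maps are completely bounded with the same norm (key functional
estimate): the matrix of values has `ℓ² → ℓ²` norm at most `c * ‖e‖`. -/
lemma cMatNorm_linMap_le {E : Submodule ℂ (H₁ →L[ℂ] H₁)} (f : ↥E →ₗ[ℂ] ℂ) {c : ℝ}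
    (hc : 0 ≤ c) (hf : ∀ x, ‖f x‖ ≤ c * ‖x‖) {ι : Type*} [Fintype ι] (e : Matrix ι ι ↥E) :
    cMatNorm (Matrix.of fun i j => f (e i j)) ≤ c * subNorm e := by
  have hsub0 : 0 ≤ subNorm e := opMatNorm_nonneg _
  refine cMatNorm_le (mul_nonneg hc hsub0) fun v => ?_
  set w : EuclideanSpace ℂ ι := cMatApply (Matrix.of fun i j => f (e i j)) v with hw
  have key : ∀ ξ : EuclideanSpace ℂ ι,
      ‖∑ i, (starRingEnd ℂ) (ξ i) * w i‖ ≤ c * subNorm e * ‖v‖ * ‖ξ‖ := by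
    intro ξ
    have hsum : ∑ i, (starRingEnd ℂ) (ξ i) * w i
        = f (∑ i, ∑ j, ((starRingEnd ℂ) (ξ i) * v j) • e i j) := by
      rw [map_sum]
      refine Finset.sum_congr rfl fun i _ => ?_
      rw [map_sum]
      have hwi : w i = ∑ j, f (e i j) * v j := cMatApply_apply _ _ _
      rw [hwi, Finset.mul_sum]
      refine Finset.sum_congr rfl fun j _ => ?_
      rw [map_smul, smul_eq_mul]
      ring
    rw [hsum]
    set s : ↥E := ∑ i, ∑ j, ((starRingEnd ℂ) (ξ i) * v j) • e i j with hs
    have hsnorm : ‖s‖ ≤ subNorm e * ‖v‖ * ‖ξ‖ := by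
      rw [Submodule.coe_norm]
      refine ContinuousLinearMap.opNorm_le_bound _ (by positivity) fun h => ?_
      set u : PiLp 2 (fun _ : ι => H₁) :=
        (WithLp.equiv 2 (∀ _ : ι, H₁)).symm (fun j => v j • h) with hu
      have hunorm : ‖u‖ = ‖v‖ * ‖h‖ := by
        rw [PiLp.norm_eq_of_L2, EuclideanSpace.norm_eq]
        have : ∀ j, u j = v j • h := fun j => rfl
        simp only [this, norm_smul, mul_pow]
        rw [← Finset.sum_mul, Real.sqrt_mul (Finset.sum_nonneg fun j _ => by positivity),
          Real.sqrt_sq (norm_nonneg h)]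
      set W : PiLp 2 (fun _ : ι => H₁) := opMatApply (e.map ((↑) : ↥E → H₁ →L[ℂ] H₁)) u with hW
      have happ : ((s : H₁ →L[ℂ] H₁)) h = ∑ i, (starRingEnd ℂ) (ξ i) • W i := by
        have hcoe : ((s : H₁ →L[ℂ] H₁))
            = ∑ i, ∑ j, ((starRingEnd ℂ) (ξ i) * v j) • ((e i j : H₁ →L[ℂ] H₁)) := by
          rw [hs]
          simp only [AddSubmonoidClass.coe_finset_sum, SetLike.val_smul]
        have hWi : ∀ i, W i = ∑ j, v j • ((e i j : H₁ →L[ℂ] H₁)) h := by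
          intro i
          rw [hW, opMatApply_apply]
          refine Finset.sum_congr rfl fun j _ => ?_
          show (e i j : H₁ →L[ℂ] H₁) (v j • h) = v j • (e i j : H₁ →L[ℂ] H₁) h
          rw [map_smul]
        rw [hcoe]
        simp only [ContinuousLinearMap.sum_apply, ContinuousLinearMap.smul_apply, hWi,
          Finset.smul_sum, smul_smul]
      rw [happ]
      calc ‖∑ i, (starRingEnd ℂ) (ξ i) • W i‖ ≤ ∑ i, ‖ξ i‖ * ‖W i‖ := by
            refine (norm_sum_le _ _).trans (Finset.sum_le_sum fun i _ => ?_)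
            rw [norm_smul, RCLike.norm_conj]
      _ ≤ Real.sqrt (∑ i, ‖ξ i‖ ^ 2) * Real.sqrt (∑ i, ‖W i‖ ^ 2) :=
            cauchySchwarz_sum _ _
      _ = ‖ξ‖ * ‖W‖ := by rw [EuclideanSpace.norm_eq, PiLp.norm_eq_of_L2]
      _ ≤ ‖ξ‖ * (subNorm e * ‖u‖) :=
            mul_le_mul_of_nonneg_left (opMatApply_le_opMatNorm _ _) (norm_nonneg ξ)
      _ = subNorm e * ‖v‖ * ‖ξ‖ * ‖h‖ := by rw [hunorm]; ring
    calc ‖f s‖ ≤ c * ‖s‖ := hf s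
    _ ≤ c * (subNorm e * ‖v‖ * ‖ξ‖) := mul_le_mul_of_nonneg_left hsnorm hc
    _ = c * subNorm e * ‖v‖ * ‖ξ‖ := by ring
  rcases (norm_nonneg w).eq_or_lt with h0 | h0
  · rw [← h0]
    positivity
  · have h4 : ∑ i, (starRingEnd ℂ) (w i) * w i = ((∑ i, ‖w i‖ ^ 2 : ℝ) : ℂ) := by
      push_cast
      exact Finset.sum_congr rfl fun i _ => RCLike.conj_mul (w i)
    have h5 : ‖∑ i, (starRingEnd ℂ) (w i) * w i‖ = ‖w‖ ^ 2 := by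
      rw [h4, Complex.norm_real,
        Real.norm_of_nonneg (Finset.sum_nonneg fun i _ => by positivity),
        EuclideanSpace.norm_eq, Real.sq_sqrt (Finset.sum_nonneg fun i _ => by positivity)]
    have h6 := key w
    rw [h5] at h6
    nlinarith [h6, h0]

end FunctionalCB

end WeightedCB

set_option maxHeartbeats 4000000
set_option synthInstance.maxHeartbeats 1000000
open WeightedCB in
open scoped Matrix.Norms.L2Operator in
/-- If `F` is a subspace of a commutative C*-algebra `B`, then every
bounded linear map `φ : E → F` is λ-cb, with `‖φ‖_cb^λ ≤ (sup_n ‖λₙ‖) · ‖φ‖`. -/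
theorem weightedCB_of_commutative_range {H₁ H₂ : Type*}
    [NormedAddCommGroup H₁] [InnerProductSpace ℂ H₁] [CompleteSpace H₁]
    [NormedAddCommGroup H₂] [InnerProductSpace ℂ H₂] [CompleteSpace H₂]
    (E : Submodule ℂ (H₁ →L[ℂ] H₁)) (hE : IsClosed (E : Set (H₁ →L[ℂ] H₁)))
    (B : StarSubalgebra ℂ (H₂ →L[ℂ] H₂)) (hB : IsClosed (B : Set (H₂ →L[ℂ] H₂)))
    (hBcomm : ∀ x ∈ B, ∀ y ∈ B, x * y = y * x)
    (F : Submodule ℂ (H₂ →L[ℂ] H₂)) (hF : IsClosed (F : Set (H₂ →L[ℂ] H₂)))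
    (hFB : (F : Set (H₂ →L[ℂ] H₂)) ⊆ (B : Set (H₂ →L[ℂ] H₂)))
    (lam : WeightedCB.Weight)
    (φ : ↥E →L[ℂ] (H₂ →L[ℂ] H₂)) (hφF : ∀ x, φ x ∈ F) :
    WeightedCB.IsWeightedCB lam (⇑φ) ∧
      WeightedCB.weightedCbNorm lam (⇑φ) ≤ WeightedCB.weightBound lam * ‖φ‖ := by
  classical
  haveI hBc : IsClosed (B : Set (H₂ →L[ℂ] H₂)) := hB
  letI instB : CStarAlgebra ↥B := StarSubalgebra.cstarAlgebra B
  letI instBc : CommCStarAlgebra ↥B :=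
    { instB with mul_comm := fun x y => Subtype.ext (hBcomm x x.2 y y.2) }
  have hchar : ∀ (χ : WeakDual.characterSpace ℂ ↥B) (y : ↥B),
      ‖χ y‖ ≤ ‖(y : H₂ →L[ℂ] H₂)‖ := by
    intro χ y
    have h1 : (χ y) ∈ spectrum ℂ y := WeakDual.CharacterSpace.apply_mem_spectrum χ y
    have h2 : ‖χ y‖ ≤ ‖y‖ * ‖(1 : ↥B)‖ := spectrum.norm_le_norm_mul_of_mem h1
    have h3 : ‖(1 : ↥B)‖ ≤ 1 := by
      show ‖((1 : ↥B) : H₂ →L[ℂ] H₂)‖ ≤ 1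
      have : ((1 : ↥B) : H₂ →L[ℂ] H₂) = 1 := rfl
      rw [this, ContinuousLinearMap.one_def]
      exact ContinuousLinearMap.norm_id_le
    have h4 : ‖y‖ = ‖(y : H₂ →L[ℂ] H₂)‖ := rfl
    nlinarith [norm_nonneg (y : H₂ →L[ℂ] H₂), norm_nonneg (1 : ↥B)]
  have hwB : 0 ≤ weightBound lam := weightBound_nonneg lam
  have key : ∀ (n : ℕ) (e : Matrix (Fin (n + 1)) (Fin (n + 1)) ↥E),
      opMatNorm (wAmp lam (⇑φ) e) ≤ weightBound lam * ‖φ‖ * subNorm e := by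
    intro n e
    have hsub0 : 0 ≤ subNorm e := opMatNorm_nonneg _
    have hmem : ∀ k l : Fin (n + 1), wAmp lam (⇑φ) e k l ∈ B := by
      intro k l
      show (∑ i, ∑ j, (lam.map n (Matrix.single i j 1)) k l • φ (e i j)) ∈ B
      refine sum_mem fun i _ => sum_mem fun j _ => ?_
      exact SMulMemClass.smul_mem _ (hFB (hφF (e i j)))
    set b : Matrix (Fin (n + 1)) (Fin (n + 1)) ↥B :=
      Matrix.of fun k l => (⟨wAmp lam (⇑φ) e k l, hmem k l⟩ : ↥B) with hb
    set g := gelfandStarTransform ↥B with hg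
    have hcont : Continuous fun χ : WeakDual.characterSpace ℂ ↥B =>
        (Matrix.of fun k l => g (b k l) χ : Matrix (Fin (n + 1)) (Fin (n + 1)) ℂ) := by
      have h1 : Continuous fun χ : WeakDual.characterSpace ℂ ↥B =>
          (fun k l => g (b k l) χ : Fin (n + 1) → Fin (n + 1) → ℂ) :=
        continuous_pi fun k => continuous_pi fun l => (g (b k l)).continuous
      let L : (Fin (n + 1) → Fin (n + 1) → ℂ) →ₗ[ℂ] Matrix (Fin (n + 1)) (Fin (n + 1)) ℂ :=
        { toFun := Matrix.of, map_add' := fun _ _ => rfl, map_smul' := fun _ _ => rfl }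
      exact L.continuous_of_finiteDimensional.comp h1
    set Ψ : C(WeakDual.characterSpace ℂ ↥B, Matrix (Fin (n + 1)) (Fin (n + 1)) ℂ) :=
      ⟨_, hcont⟩ with hΨdef
    let uh : C(WeakDual.characterSpace ℂ ↥B, ℂ) →⋆ₐ[ℂ] (H₂ →L[ℂ] H₂) :=
      (StarSubalgebra.subtype B).comp (eqvHom g.symm)
    let Φ := (opT (H := H₂) (ι := Fin (n + 1))).comp (cmToMat uh)
    have hΦΨ : Φ Ψ = opCLM (wAmp lam (⇑φ) e) := by
      show opCLM (Matrix.of fun k l => uh (entryCM Ψ k l)) = _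
      congr 1
      refine Matrix.ext fun k l => ?_
      show ((g.symm (entryCM Ψ k l) : ↥B) : H₂ →L[ℂ] H₂) = wAmp lam (⇑φ) e k l
      have h1 : entryCM Ψ k l = g (b k l) := ContinuousMap.ext fun χ => rfl
      rw [h1, StarAlgEquiv.symm_apply_apply]
      rfl
    have hbound : ∀ χ : WeakDual.characterSpace ℂ ↥B,
        ‖Ψ χ‖ ≤ weightBound lam * ‖φ‖ * subNorm e := by
      intro χ
      let fχ : ↥E →ₗ[ℂ] ℂ :=
        { toFun := fun x => χ (⟨φ x, hFB (hφF x)⟩ : ↥B)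
          map_add' := fun x y => by
            have hxy : (⟨φ (x + y), hFB (hφF (x + y))⟩ : ↥B)
                = ⟨φ x, hFB (hφF x)⟩ + ⟨φ y, hFB (hφF y)⟩ := Subtype.ext (by
              show φ (x + y) = φ x + φ y
              rw [map_add])
            show χ (⟨φ (x + y), hFB (hφF (x + y))⟩ : ↥B) = _
            rw [hxy, map_add]
          map_smul' := fun c x => by
            have hxy : (⟨φ (c • x), hFB (hφF (c • x))⟩ : ↥B)
                = c • ⟨φ x, hFB (hφF x)⟩ := Subtype.ext (by
              show φ (c • x) = c • φ x
              rw [map_smul])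
            show χ (⟨φ (c • x), hFB (hφF (c • x))⟩ : ↥B) = _
            rw [hxy, map_smul, RingHom.id_apply, smul_eq_mul] }
      have hfb : ∀ x : ↥E, ‖fχ x‖ ≤ ‖φ‖ * ‖x‖ := fun x =>
        (hchar χ _).trans (φ.le_opNorm x)
      have hΨχ : Ψ χ = lam.map n (Matrix.of fun i j => fχ (e i j)) := by
        refine Matrix.ext fun k l => ?_
        have h2 : (Ψ χ) k l = χ (b k l) := rfl
        have h3 : b k l = ∑ i, ∑ j, (lam.map n (Matrix.single i j 1)) k l •
            (⟨φ (e i j), hFB (hφF (e i j))⟩ : ↥B) := by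
          refine Subtype.ext ?_
          simp only [AddSubmonoidClass.coe_finset_sum, SetLike.val_smul]
          rfl
        have h4 : (lam.map n (Matrix.of fun i j => fχ (e i j))) k l
            = ∑ i, ∑ j, fχ (e i j) * (lam.map n (Matrix.single i j 1)) k l := by
          conv_lhs => rw [Matrix.matrix_eq_sum_single
            (Matrix.of fun i j => fχ (e i j))]
          simp only [Matrix.of_apply]
          rw [map_sum, Matrix.sum_apply]
          refine Finset.sum_congr rfl fun i _ => ?_
          rw [map_sum, Matrix.sum_apply]
          refine Finset.sum_congr rfl fun j _ => ?_
          have h5 : Matrix.single i j (fχ (e i j))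
              = fχ (e i j) • Matrix.single i j 1 := by
            rw [Matrix.smul_single, smul_eq_mul, mul_one]
          rw [h5, map_smul, Matrix.smul_apply, smul_eq_mul]
        rw [h2, h3, map_sum, h4]
        refine Finset.sum_congr rfl fun i _ => ?_
        rw [map_sum]
        refine Finset.sum_congr rfl fun j _ => ?_
        rw [map_smul, smul_eq_mul, mul_comm]
        rfl
      calc ‖Ψ χ‖ ≤ cMatNorm (Ψ χ) := l2OpNorm_le_cMatNorm _
      _ = cMatNorm (lam.map n (Matrix.of fun i j => fχ (e i j))) := by rw [hΨχ]
      _ ≤ weightBound lam * cMatNorm (Matrix.of fun i j => fχ (e i j)) :=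
            weightBound_spec lam n _
      _ ≤ weightBound lam * (‖φ‖ * subNorm e) :=
            mul_le_mul_of_nonneg_left
              (cMatNorm_linMap_le fχ (ContinuousLinearMap.opNorm_nonneg φ) hfb e) hwB
      _ = weightBound lam * ‖φ‖ * subNorm e := by ring
    have hnn : 0 ≤ weightBound lam * ‖φ‖ * subNorm e :=
      mul_nonneg (mul_nonneg hwB (ContinuousLinearMap.opNorm_nonneg φ)) hsub0
    have hΨnorm : ‖Ψ‖ ≤ weightBound lam * ‖φ‖ * subNorm e :=
      (ContinuousMap.norm_le Ψ hnn).2 hbound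
    have hle : ‖opCLM (wAmp lam (⇑φ) e)‖ ≤ weightBound lam * ‖φ‖ * subNorm e := by
      rw [← hΦΨ]
      exact (NonUnitalStarAlgHom.norm_apply_le Φ Ψ).trans hΨnorm
    refine opMatNorm_le hnn fun v => ?_
    calc ‖opMatApply (wAmp lam (⇑φ) e) v‖
        = ‖opCLM (wAmp lam (⇑φ) e) v‖ := rfl
    _ ≤ ‖opCLM (wAmp lam (⇑φ) e)‖ * ‖v‖ := ContinuousLinearMap.le_opNorm _ _
    _ ≤ (weightBound lam * ‖φ‖ * subNorm e) * ‖v‖ :=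
          mul_le_mul_of_nonneg_right hle (norm_nonneg v)
  have h0 : 0 ≤ weightBound lam * ‖φ‖ :=
    mul_nonneg hwB (ContinuousLinearMap.opNorm_nonneg φ)
  constructor
  · exact ⟨weightBound lam * ‖φ‖, h0, fun n e => key n e⟩
  · exact auxSet_sInf_le (fun C hC => hC.1) ⟨h0, fun n e => key n e⟩
end
end

section
/- Let H be an infinite-dimensional complex Hilbert space and A = B(H) the C*-algebra of bounded linear operators on H. Let λ be the transpose weight, λ_n(a) = aᵀ on M_n(ℂ). Then the identity map on A is not λ-cb: there is no constant C ≥ 0 such that for all n ≥ 1 and all matrices e = [e_{ij}] ∈ M_n(B(H)), the transposed matrix [e_{ji}] satisfies ‖[e_{ji}]‖ ≤ C · ‖[e_{ij}]‖ in the C*-algebra M_n(B(H)). -/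
noncomputable section

section Proof10Aux

open WeightedCB
open scoped InnerProductSpace

variable {H : Type*} [NormedAddCommGroup H] [InnerProductSpace ℂ H]

private lemma sq_le_imp_le' {a b : ℝ} (hb : 0 ≤ b) (h : a ^ 2 ≤ b ^ 2) : a ≤ b := by
  nlinarith [sq_nonneg (a - b), sq_nonneg (a + b)]

private lemma opMatApply_norm_sq {n : ℕ} (e : Matrix (Fin n) (Fin n) (H →L[ℂ] H))
    (v : PiLp 2 fun _ : Fin n => H) :
    ‖opMatApply e v‖ ^ 2 = ∑ i, ‖∑ j, e i j (v j)‖ ^ 2 := by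
  rw [opMatApply, PiLp.norm_sq_eq_of_L2]
  rfl

private lemma piLp_norm_sq {n : ℕ} (v : PiLp 2 fun _ : Fin n => H) :
    ‖v‖ ^ 2 = ∑ i, ‖v i‖ ^ 2 :=
  PiLp.norm_sq_eq_of_L2 _ v

private lemma orthonormal_norm_sq_sum {ι : Type*} [Fintype ι] {u : ι → H}
    (hu : Orthonormal ℂ u) (l : ι → ℂ) :
    ‖∑ i, l i • u i‖ ^ 2 = ∑ i, ‖l i‖ ^ 2 := by
  have h := hu.inner_sum l l Finset.univ
  have h2 : RCLike.re (⟪(∑ i, l i • u i : H), ∑ i, l i • u i⟫_ℂ) = ‖∑ i, l i • u i‖ ^ 2 :=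
    inner_self_eq_norm_sq _
  rw [← h2, h, map_sum]
  refine Finset.sum_congr rfl fun i _ => ?_
  rw [RCLike.conj_mul, ← RCLike.ofReal_pow, RCLike.ofReal_re]

private lemma opMatNorm_mem {n : ℕ} (e : Matrix (Fin n) (Fin n) (H →L[ℂ] H)) :
    (∑ i, ∑ j, ‖e i j‖) ∈ {C : ℝ | 0 ≤ C ∧ ∀ v : PiLp 2 fun _ : Fin n => H,
      ‖opMatApply e v‖ ≤ C * ‖v‖} := by
  constructor
  · positivity
  · intro v
    have hvj : ∀ j, ‖v j‖ ≤ ‖v‖ := by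
      intro j
      refine sq_le_imp_le' (norm_nonneg _) ?_
      rw [piLp_norm_sq]
      exact Finset.single_le_sum (f := fun i => ‖v i‖ ^ 2) (fun i _ => sq_nonneg _) (Finset.mem_univ j)
    refine sq_le_imp_le' (by positivity) ?_
    rw [opMatApply_norm_sq, mul_pow]
    calc ∑ i, ‖∑ j, e i j (v j)‖ ^ 2
        ≤ (∑ i, ‖∑ j, e i j (v j)‖) ^ 2 := by
          exact Finset.sum_sq_le_sq_sum_of_nonneg (fun i _ => norm_nonneg _)
      _ ≤ ((∑ i, ∑ j, ‖e i j‖) * ‖v‖) ^ 2 := by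
          refine pow_le_pow_left₀ (by positivity) ?_ 2
          rw [Finset.sum_mul]
          refine Finset.sum_le_sum fun i _ => ?_
          refine (norm_sum_le _ _).trans ?_
          rw [Finset.sum_mul]
          refine Finset.sum_le_sum fun j _ => ?_
          exact ((e i j).le_opNorm (v j)).trans
            (mul_le_mul_of_nonneg_left (hvj j) (norm_nonneg _))
      _ = (∑ i, ∑ j, ‖e i j‖) ^ 2 * ‖v‖ ^ 2 := mul_pow _ _ 2

end Proof10Aux

/-- For an infinite dimensional Hilbert space `H`, the identity map on
`B(H)` is not λ-cb for the transpose weight: there is no constant `C ≥ 0` with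
`‖[e_{ji}]‖ ≤ C · ‖[e_{ij}]‖` for all `n` and all `e ∈ Mₙ(B(H))`. -/
theorem transpose_not_weightedCB {H : Type*}
    [NormedAddCommGroup H] [InnerProductSpace ℂ H] [CompleteSpace H]
    (hinf : ¬ FiniteDimensional ℂ H) :
    ¬ ∃ C : ℝ, 0 ≤ C ∧ ∀ (n : ℕ) (e : Matrix (Fin (n + 1)) (Fin (n + 1)) (H →L[ℂ] H)),
      WeightedCB.opMatNorm e.transpose ≤ C * WeightedCB.opMatNorm e := by
  open WeightedCB in
  open scoped InnerProductSpace in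
  rintro ⟨C, hC0, hC⟩
  -- Get an infinite orthonormal family in `H`.
  obtain ⟨w, b, hb⟩ := exists_hilbertBasis ℂ H
  haveI : Infinite w := by
    rw [Set.infinite_coe_iff]
    intro hfin
    apply hinf
    haveI hFD : FiniteDimensional ℂ (Submodule.span ℂ w) :=
      FiniteDimensional.span_of_finite ℂ hfin
    have hclosed : IsClosed ((Submodule.span ℂ w : Submodule ℂ H) : Set H) :=
      Submodule.closed_of_finiteDimensional _
    have hd := b.dense_span
    rw [hb, Subtype.range_coe, hclosed.submodule_topologicalClosure_eq] at hd
    rw [hd] at hFD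
    exact Submodule.topEquiv.finiteDimensional
  set n : ℕ := Nat.ceil C with hn
  set N : ℝ := (n : ℝ) + 1 with hN
  have hNpos : 0 < N := by positivity
  -- Orthonormal family of size `n + 1`.
  set f : Fin (n + 1) → w := fun i => Infinite.natEmbedding w i.val with hf
  have hfinj : Function.Injective f :=
    (Infinite.natEmbedding w).injective.comp Fin.val_injective
  set u : Fin (n + 1) → H := fun i => b (f i) with hudef
  have hu : Orthonormal ℂ u := b.orthonormal.comp f hfinj
  -- The matrix `e i j = ⟪u i, ·⟫ • u j`.
  set e : Matrix (Fin (n + 1)) (Fin (n + 1)) (H →L[ℂ] H) :=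
    Matrix.of fun i j => (innerSL ℂ (u i)).smulRight (u j) with he
  have heapp : ∀ i j x, e i j x = ⟪u i, x⟫_ℂ • u j := fun i j x => rfl
  -- `‖e‖ ≤ 1`.
  have key1 : ∀ v : PiLp 2 fun _ : Fin (n + 1) => H,
      ‖WeightedCB.opMatApply e v‖ ≤ 1 * ‖v‖ := by
    intro v
    rw [one_mul]
    refine sq_le_imp_le' (norm_nonneg _) ?_
    rw [opMatApply_norm_sq, piLp_norm_sq]
    have hrow : ∀ i, ‖∑ j, e i j (v j)‖ ^ 2 = ∑ j, ‖(⟪u i, v j⟫_ℂ)‖ ^ 2 := by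
      intro i
      rw [show (∑ j, e i j (v j)) = ∑ j, (⟪u i, v j⟫_ℂ) • u j from
        Finset.sum_congr rfl fun j _ => heapp i j (v j)]
      exact orthonormal_norm_sq_sum hu _
    calc ∑ i, ‖∑ j, e i j (v j)‖ ^ 2
        = ∑ i, ∑ j, ‖(⟪u i, v j⟫_ℂ)‖ ^ 2 := Finset.sum_congr rfl fun i _ => hrow i
      _ = ∑ j, ∑ i, ‖(⟪u i, v j⟫_ℂ)‖ ^ 2 := Finset.sum_comm
      _ ≤ ∑ j, ‖v j‖ ^ 2 := Finset.sum_le_sum fun j _ => hu.sum_inner_products_le (v j)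
  have hup : WeightedCB.opMatNorm e ≤ 1 := by
    rw [WeightedCB.opMatNorm]
    exact csInf_le ⟨0, fun x hx => hx.1⟩ ⟨zero_le_one, key1⟩
  -- the test vector `v = (u 0, …, u n)`
  set v : PiLp 2 fun _ : Fin (n + 1) => H :=
    (WithLp.equiv 2 (∀ _ : Fin (n + 1), H)).symm u with hv
  have hvcoord : ∀ j, v j = u j := fun j => rfl
  have hv_sq : ‖v‖ ^ 2 = N := by
    rw [piLp_norm_sq]
    simp only [hvcoord]
    rw [Finset.sum_congr rfl fun j _ => by rw [hu.1 j, one_pow]]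
    simp [hN, Finset.card_univ]
  have hvpos : 0 < ‖v‖ := by
    rcases (norm_nonneg v).lt_or_eq with h | h
    · exact h
    · exfalso; rw [← h] at hv_sq; simp at hv_sq; nlinarith
  -- `opMatApply eᵀ v` has `i`-th coordinate `(n+1) • u i`.
  have hAv : ∀ i : Fin (n + 1),
      (∑ j, e.transpose i j (v j)) = ((N : ℂ)) • u i := by
    intro i
    have : ∀ j : Fin (n + 1), e.transpose i j (v j) = (1 : ℂ) • u i := by
      intro j
      rw [Matrix.transpose_apply, hvcoord, heapp j i (u j)]
      congr 1
      rw [inner_self_eq_norm_sq_to_K, hu.1 j]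
      norm_num
    rw [Finset.sum_congr rfl fun j _ => this j, Finset.sum_const, Finset.card_univ,
      Fintype.card_fin, one_smul,
      show ((N : ℂ)) = ((n + 1 : ℕ) : ℂ) by rw [hN]; push_cast; ring,
      Nat.cast_smul_eq_nsmul]
  have hAv_sq : ‖WeightedCB.opMatApply e.transpose v‖ ^ 2 = N ^ 2 * N := by
    rw [opMatApply_norm_sq]
    rw [Finset.sum_congr rfl fun i _ => by rw [hAv i]]
    have : ∀ i : Fin (n + 1), ‖((N : ℂ)) • u i‖ ^ 2 = N ^ 2 := by
      intro i
      rw [norm_smul, hu.1 i, mul_one, Complex.norm_real, Real.norm_eq_abs,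
        abs_of_pos hNpos]
    rw [Finset.sum_congr rfl fun i _ => this i]
    simp [hN, Finset.card_univ]
    ring
  have hle : N * ‖v‖ ≤ ‖WeightedCB.opMatApply e.transpose v‖ := by
    refine sq_le_imp_le' (norm_nonneg _) ?_
    rw [mul_pow, hAv_sq, hv_sq]
  have hlow : N ≤ WeightedCB.opMatNorm e.transpose := by
    rw [WeightedCB.opMatNorm]
    refine le_csInf ⟨_, opMatNorm_mem e.transpose⟩ ?_
    rintro C' ⟨hC'0, hC'⟩
    exact le_of_mul_le_mul_right (hle.trans (hC' v)) hvpos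
  have : N ≤ C :=
    calc N ≤ WeightedCB.opMatNorm e.transpose := hlow
      _ ≤ C * WeightedCB.opMatNorm e := hC n e
      _ ≤ C * 1 := mul_le_mul_of_nonneg_left hup hC0
      _ = C := mul_one C
  have hceil : C ≤ (n : ℝ) := by rw [hn]; exact Nat.le_ceil C
  rw [hN] at this
  linarith
end
end

section
/- Let E ⊆ A and F ⊆ B be operator spaces and let λ be the matrix-multiplication bilinear weight, λ_n(a,b) = ab on M_n(ℂ) (so k(n) = n). Let p ≥ 1 and let φ = [φ_{rq}] : E × F → M_p(ℂ) be a λ-cb bilinear map, where each φ_{rq} : E × F → ℂ is a bilinear form. Then for every m ≥ 1 and all matrices e = [e_{ij}] ∈ M_m(E), f = [f_{jl}] ∈ M_m(F), the pm × pm scalar matrix whose entry at position ((r,i),(q,l)) is Σ_{j=1}^m φ_{rq}(e_{ij}, f_{jl}) has C*-norm at most ‖φ‖_λ · ‖e‖ · ‖f‖. -/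
noncomputable section

namespace WeightedCB

/-- The amplification, at level `m + 1`, of a bilinear map `φ : E × F → M_p(ℂ)` for the
matrix-multiplication bilinear weight `λₙ(a, b) = a·b`, written on the flattened index
set `Fin p × Fin (m+1)`: the entry at `((r, i), (q, l))` is `∑ j, φ_{rq}(e i j, f j l)`. -/
def mulAmp {E F : Type*} {p : ℕ} (φ : E → F → Matrix (Fin p) (Fin p) ℂ) {m : ℕ}
    (e : Matrix (Fin (m + 1)) (Fin (m + 1)) E)
    (f : Matrix (Fin (m + 1)) (Fin (m + 1)) F) :
    Matrix (Fin p × Fin (m + 1)) (Fin p × Fin (m + 1)) ℂ :=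
  Matrix.of fun ri ql => ∑ j, φ (e ri.2 j) (f j ql.2) ri.1 ql.1

section

variable {H₁ H₂ : Type*}
  [NormedAddCommGroup H₁] [InnerProductSpace ℂ H₁]
  [NormedAddCommGroup H₂] [InnerProductSpace ℂ H₂]

/-- `φ : E × F → M_p(ℂ)` is completely λ-bounded for the matrix-multiplication weight. -/
def IsMulBilCB {E : Submodule ℂ (H₁ →L[ℂ] H₁)} {F : Submodule ℂ (H₂ →L[ℂ] H₂)}
    {p : ℕ} (φ : ↥E → ↥F → Matrix (Fin p) (Fin p) ℂ) : Prop :=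
  ∃ C : ℝ, 0 ≤ C ∧ ∀ (m : ℕ) (e : Matrix (Fin (m + 1)) (Fin (m + 1)) ↥E)
    (f : Matrix (Fin (m + 1)) (Fin (m + 1)) ↥F),
    cMatNorm (mulAmp φ e f) ≤ C * (subNorm e * subNorm f)

/-- `‖φ‖_λ` for the matrix-multiplication weight, as the least uniform bound. -/
def mulBilCbNorm {E : Submodule ℂ (H₁ →L[ℂ] H₁)} {F : Submodule ℂ (H₂ →L[ℂ] H₂)}
    {p : ℕ} (φ : ↥E → ↥F → Matrix (Fin p) (Fin p) ℂ) : ℝ :=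
  sInf {C : ℝ | 0 ≤ C ∧ ∀ (m : ℕ) (e : Matrix (Fin (m + 1)) (Fin (m + 1)) ↥E)
    (f : Matrix (Fin (m + 1)) (Fin (m + 1)) ↥F),
    cMatNorm (mulAmp φ e f) ≤ C * (subNorm e * subNorm f)}

end

end WeightedCB

/-- Auxiliary: the set of uniform bounds for the matrix-multiplication weight. -/
def sInf_set {H₁ H₂ : Type*}
    [NormedAddCommGroup H₁] [InnerProductSpace ℂ H₁]
    [NormedAddCommGroup H₂] [InnerProductSpace ℂ H₂]
    (E : Submodule ℂ (H₁ →L[ℂ] H₁)) (F : Submodule ℂ (H₂ →L[ℂ] H₂)) (p : ℕ)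
    (φ : ↥E →ₗ[ℂ] (↥F →ₗ[ℂ] Matrix (Fin p) (Fin p) ℂ)) : Set ℝ :=
  {C : ℝ | 0 ≤ C ∧ ∀ (m : ℕ) (e : Matrix (Fin (m + 1)) (Fin (m + 1)) ↥E)
    (f : Matrix (Fin (m + 1)) (Fin (m + 1)) ↥F),
    WeightedCB.cMatNorm (WeightedCB.mulAmp (fun x y => φ x y) e f) ≤
      C * (WeightedCB.subNorm e * WeightedCB.subNorm f)}

/-- Let `λ` be the matrix-multiplication bilinear weight and let
`φ = [φ_{rq}] : E × F → M_p(ℂ)` be a λ-cb bilinear map.  Then for all `m ≥ 1`,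
`e ∈ Mₘ(E)` and `f ∈ Mₘ(F)`, the `pm × pm` scalar matrix with entry
`∑ j, φ_{rq}(e_{ij}, f_{jl})` at position `((r, i), (q, l))` has C*-norm at most
`‖φ‖_λ · ‖e‖ · ‖f‖`. -/
theorem mulBilCB_pairing_bound {H₁ H₂ : Type*}
    [NormedAddCommGroup H₁] [InnerProductSpace ℂ H₁] [CompleteSpace H₁]
    [NormedAddCommGroup H₂] [InnerProductSpace ℂ H₂] [CompleteSpace H₂]
    (E : Submodule ℂ (H₁ →L[ℂ] H₁)) (hE : IsClosed (E : Set (H₁ →L[ℂ] H₁)))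
    (F : Submodule ℂ (H₂ →L[ℂ] H₂)) (hF : IsClosed (F : Set (H₂ →L[ℂ] H₂)))
    (p : ℕ) (hp : 1 ≤ p)
    (φ : ↥E →ₗ[ℂ] (↥F →ₗ[ℂ] Matrix (Fin p) (Fin p) ℂ))
    (hφ : WeightedCB.IsMulBilCB (fun x y => φ x y)) :
    ∀ (m : ℕ) (e : Matrix (Fin (m + 1)) (Fin (m + 1)) ↥E)
      (f : Matrix (Fin (m + 1)) (Fin (m + 1)) ↥F),
      WeightedCB.cMatNorm (WeightedCB.mulAmp (fun x y => φ x y) e f) ≤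
        WeightedCB.mulBilCbNorm (fun x y => φ x y) *
          WeightedCB.subNorm e * WeightedCB.subNorm f := by
  intro m e f
  obtain ⟨C0, hC0, hbound⟩ := hφ
  have hne : (sInf_set E F p φ).Nonempty := ⟨C0, hC0, hbound⟩
  have hKe : 0 ≤ WeightedCB.subNorm e :=
    Real.sInf_nonneg (fun x hx => hx.1)
  have hKf : 0 ≤ WeightedCB.subNorm f :=
    Real.sInf_nonneg (fun x hx => hx.1)
  have key : ∀ C ∈ sInf_set E F p φ,
      WeightedCB.cMatNorm (WeightedCB.mulAmp (fun x y => φ x y) e f) ≤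
        C * (WeightedCB.subNorm e * WeightedCB.subNorm f) :=
    fun C hC => hC.2 m e f
  have hK : 0 ≤ WeightedCB.subNorm e * WeightedCB.subNorm f := mul_nonneg hKe hKf
  rw [mul_assoc]
  rcases hK.eq_or_lt with h0 | hpos
  · have := key C0 ⟨hC0, hbound⟩
    rw [← h0, mul_zero] at this
    rw [← h0, mul_zero]
    exact this
  · rw [← div_le_iff₀ hpos]
    exact le_csInf hne fun C hC => (div_le_iff₀ hpos).2 (key C hC)
end
end

section
/- Let E ⊆ A, F ⊆ B, G ⊆ C be operator spaces and let λ be a symmetric bilinear weight, i.e. there exist unitary matrices u_k ∈ M_k(ℂ) such that λ_n(b,a) = u_{k(n)}⁻¹ · λ_n(a,b) · u_{k(n)} for all a, b ∈ M_n(ℂ) and all n ≥ 1. Then for every bilinear map φ : E × F → G, the flipped bilinear map φ̄ : F × E → G, φ̄(f,e) := φ(e,f), is λ-cb if and only if φ is λ-cb, and in that case ‖φ̄‖_λ = ‖φ‖_λ. -/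
noncomputable section

namespace WeightedCB

open scoped BigOperators

section Flip

variable {H : Type*} [NormedAddCommGroup H] [InnerProductSpace ℂ H]

/-- Action of a scalar matrix on `ℓ²(ι, H)`. -/
def vmul {ι : Type*} [Fintype ι] (a : Matrix ι ι ℂ) (v : PiLp 2 fun _ : ι => H) :
    PiLp 2 fun _ : ι => H :=
  (WithLp.equiv 2 (∀ _ : ι, H)).symm fun i =>
    ∑ j, a i j • (WithLp.equiv 2 (∀ _ : ι, H)) v j

lemma vmul_apply {ι : Type*} [Fintype ι] (a : Matrix ι ι ℂ) (v : PiLp 2 fun _ : ι => H)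
    (i : ι) : vmul a v i = ∑ j, a i j • v j := rfl

lemma vmul_vmul {ι : Type*} [Fintype ι] (a b : Matrix ι ι ℂ) (v : PiLp 2 fun _ : ι => H) :
    vmul a (vmul b v) = vmul (a * b) v := by
  ext i
  simp only [vmul_apply, Finset.smul_sum, smul_smul, Matrix.mul_apply, Finset.sum_smul]
  rw [Finset.sum_comm]

lemma vmul_one {ι : Type*} [Fintype ι] [DecidableEq ι] (v : PiLp 2 fun _ : ι => H) :
    vmul (1 : Matrix ι ι ℂ) v = v := by
  ext i
  simp [vmul_apply, Matrix.one_apply, ite_smul]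

lemma norm_vmul_of_unitary {ι : Type*} [Fintype ι] [DecidableEq ι] {a : Matrix ι ι ℂ}
    (ha : star a * a = 1) (v : PiLp 2 fun _ : ι => H) : ‖vmul a v‖ = ‖v‖ := by
  have hinner : inner ℂ (vmul a v) (vmul a v) = inner ℂ v v := by
    simp only [PiLp.inner_apply, vmul_apply]
    calc ∑ i, inner ℂ (∑ j, a i j • v j) (∑ j', a i j' • v j')
        = ∑ i, ∑ j, ∑ j', (starRingEnd ℂ (a i j) * a i j') * inner ℂ (v j) (v j') := by
          refine Finset.sum_congr rfl fun i _ => ?_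
          rw [sum_inner]
          refine Finset.sum_congr rfl fun j _ => ?_
          rw [inner_sum]
          refine Finset.sum_congr rfl fun j' _ => ?_
          rw [inner_smul_left, inner_smul_right]; ring
      _ = ∑ j, ∑ j', ((star a * a) j j') * inner ℂ (v j) (v j') := by
          rw [Finset.sum_comm]
          refine Finset.sum_congr rfl fun j _ => ?_
          rw [Finset.sum_comm]
          refine Finset.sum_congr rfl fun j' _ => ?_
          rw [Matrix.mul_apply, Finset.sum_mul]
          refine Finset.sum_congr rfl fun i _ => ?_
          simp [Matrix.star_apply, Matrix.conjTranspose_apply]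
      _ = ∑ j, inner ℂ (v j) (v j) := by
          rw [ha]
          simp [Matrix.one_apply, ite_mul]
      _ = _ := rfl
  have h1 : ‖vmul a v‖ = Real.sqrt (RCLike.re (inner ℂ (vmul a v) (vmul a v))) :=
    norm_eq_sqrt_re_inner _
  have h2 : ‖v‖ = Real.sqrt (RCLike.re (inner ℂ v v)) := norm_eq_sqrt_re_inner _
  rw [h1, h2, hinner]

/-- The conjugation of a matrix of operators by scalar matrices. -/
def conjMat {ι : Type*} [Fintype ι] (a b : Matrix ι ι ℂ)
    (X : Matrix ι ι (H →L[ℂ] H)) : Matrix ι ι (H →L[ℂ] H) :=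
  Matrix.of fun p q => ∑ r, ∑ c, (a p r * b c q) • X r c

lemma opMatApply_conjMat {ι : Type*} [Fintype ι] (a b : Matrix ι ι ℂ)
    (X : Matrix ι ι (H →L[ℂ] H)) (v : PiLp 2 fun _ : ι => H) :
    opMatApply (conjMat a b X) v = vmul a (opMatApply X (vmul b v)) := by
  ext i
  show ∑ j, conjMat a b X i j (v j) = ∑ r, a i r • (opMatApply X (vmul b v)) r
  have hr : ∀ r, (opMatApply X (vmul b v)) r = ∑ c, X r c (∑ j, b c j • v j) := fun r => rfl
  simp only [hr, conjMat, Matrix.of_apply, map_sum, map_smul, Finset.smul_sum, smul_smul,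
    ContinuousLinearMap.coe_sum', Finset.sum_apply, ContinuousLinearMap.coe_smul',
    Pi.smul_apply]
  rw [Finset.sum_comm]
  refine Finset.sum_congr rfl fun r _ => ?_
  rw [Finset.sum_comm]

lemma opMatNorm_conjMat {ι : Type*} [Fintype ι] [DecidableEq ι] {a : Matrix ι ι ℂ}
    (h1 : star a * a = 1) (h2 : a * star a = 1)
    (X : Matrix ι ι (H →L[ℂ] H)) :
    opMatNorm (conjMat (star a) a X) = opMatNorm X := by
  have hstar1 : star (star a) * star a = 1 := by
    rw [star_star]; exact h2
  unfold opMatNorm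
  congr 1
  ext C
  simp only [Set.mem_setOf_eq]
  constructor
  · rintro ⟨hC, h⟩
    refine ⟨hC, fun w => ?_⟩
    have key : opMatApply X w =
        vmul a (opMatApply (conjMat (star a) a X) (vmul (star a) w)) := by
      rw [opMatApply_conjMat, vmul_vmul, vmul_vmul, h2, vmul_one, vmul_one]
    rw [key, norm_vmul_of_unitary h1]
    calc ‖opMatApply (conjMat (star a) a X) (vmul (star a) w)‖
        ≤ C * ‖vmul (star a) w‖ := h _
      _ = C * ‖w‖ := by rw [norm_vmul_of_unitary hstar1]
  · rintro ⟨hC, h⟩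
    refine ⟨hC, fun v => ?_⟩
    rw [opMatApply_conjMat, norm_vmul_of_unitary hstar1]
    calc ‖opMatApply X (vmul a v)‖ ≤ C * ‖vmul a v‖ := h _
      _ = C * ‖v‖ := by rw [norm_vmul_of_unitary h1]

lemma sum4_swap {M ι κ : Type*} [AddCommMonoid M] [Fintype ι] [Fintype κ]
    (g : ι → ι → κ → κ → M) :
    ∑ i, ∑ j, ∑ s, ∑ t, g i j s t = ∑ s, ∑ t, ∑ i, ∑ j, g i j s t :=
  calc ∑ i, ∑ j, ∑ s, ∑ t, g i j s t
      = ∑ i, ∑ s, ∑ j, ∑ t, g i j s t :=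
        Finset.sum_congr rfl fun _ _ => Finset.sum_comm
    _ = ∑ s, ∑ i, ∑ j, ∑ t, g i j s t := Finset.sum_comm
    _ = ∑ s, ∑ i, ∑ t, ∑ j, g i j s t :=
        Finset.sum_congr rfl fun _ _ => Finset.sum_congr rfl fun _ _ => Finset.sum_comm
    _ = ∑ s, ∑ t, ∑ i, ∑ j, g i j s t :=
        Finset.sum_congr rfl fun _ _ => Finset.sum_comm

lemma sum6_reorder {M ι κ : Type*} [AddCommMonoid M] [Fintype ι] [Fintype κ]
    (T : ι → ι → ι → ι → κ → κ → M) :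
    ∑ i, ∑ j, ∑ s, ∑ t, ∑ r, ∑ c, T i j s t r c =
      ∑ r, ∑ c, ∑ s, ∑ t, ∑ i, ∑ j, T i j s t r c :=
  calc ∑ i, ∑ j, ∑ s, ∑ t, ∑ r, ∑ c, T i j s t r c
      = ∑ s, ∑ t, ∑ i, ∑ j, ∑ r, ∑ c, T i j s t r c :=
        sum4_swap fun i j s t => ∑ r, ∑ c, T i j s t r c
    _ = ∑ s, ∑ t, ∑ r, ∑ c, ∑ i, ∑ j, T i j s t r c :=
        Finset.sum_congr rfl fun s _ => Finset.sum_congr rfl fun t _ =>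
          sum4_swap fun i j r c => T i j s t r c
    _ = ∑ r, ∑ c, ∑ s, ∑ t, ∑ i, ∑ j, T i j s t r c :=
        sum4_swap fun s t r c => ∑ i, ∑ j, T i j s t r c

/-- The amplification of the flipped bilinear map is the conjugation of the
amplification of the original map. -/
lemma bAmp_flip_eq_conj {E F : Type*} (lam : BilWeight)
    (u : ∀ k : ℕ, Matrix (Fin k) (Fin k) ℂ)
    (hu : ∀ k, u k ∈ Matrix.unitaryGroup (Fin k) ℂ)
    (hsym : ∀ n a b, lam.map n b a = (u (lam.k n))⁻¹ * lam.map n a b * u (lam.k n))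
    (φ : E → F → (H →L[ℂ] H)) {n : ℕ}
    (e : Matrix (Fin (n + 1)) (Fin (n + 1)) E)
    (f : Matrix (Fin (n + 1)) (Fin (n + 1)) F) :
    bAmp lam (fun y x => φ x y) f e =
      conjMat (star (u (lam.k n))) (u (lam.k n)) (bAmp lam φ e f) := by
  have hinv : (u (lam.k n))⁻¹ = star (u (lam.k n)) :=
    Matrix.inv_eq_left_inv ((Unitary.mem_iff.mp (hu (lam.k n))).1)
  funext p q
  show (∑ i, ∑ j, ∑ s, ∑ t,
      (lam.map n (Matrix.single i j 1) (Matrix.single s t 1)) p q •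
        φ (e s t) (f i j)) =
    ∑ r, ∑ c, (star (u (lam.k n)) p r * (u (lam.k n)) c q) • bAmp lam φ e f r c
  have hterm : ∀ (i j s t : Fin (n + 1)),
      (lam.map n (Matrix.single i j 1) (Matrix.single s t 1)) p q =
        ∑ r, ∑ c, (star (u (lam.k n)) p r * (u (lam.k n)) c q) *
          (lam.map n (Matrix.single s t 1) (Matrix.single i j 1)) r c := by
    intro i j s t
    rw [hsym n (Matrix.single s t 1) (Matrix.single i j 1), hinv]
    set A := (lam.map n (Matrix.single s t 1)) (Matrix.single i j 1)
    calc (star (u (lam.k n)) * A * u (lam.k n)) p q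
        = ∑ c, (star (u (lam.k n)) * A) p c * u (lam.k n) c q := Matrix.mul_apply
      _ = ∑ c, ∑ r, (star (u (lam.k n)) p r * u (lam.k n) c q) * A r c := by
          refine Finset.sum_congr rfl fun c _ => ?_
          rw [Matrix.mul_apply, Finset.sum_mul]
          refine Finset.sum_congr rfl fun r _ => ?_
          ring
      _ = ∑ r, ∑ c, (star (u (lam.k n)) p r * u (lam.k n) c q) * A r c :=
          Finset.sum_comm
  calc (∑ i, ∑ j, ∑ s, ∑ t,
      (lam.map n (Matrix.single i j 1) (Matrix.single s t 1)) p q •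
        φ (e s t) (f i j))
      = ∑ i, ∑ j, ∑ s, ∑ t, ∑ r, ∑ c,
          (star (u (lam.k n)) p r * (u (lam.k n)) c q) •
          ((lam.map n (Matrix.single s t 1) (Matrix.single i j 1)) r c •
            φ (e s t) (f i j)) := by
        refine Finset.sum_congr rfl fun i _ => Finset.sum_congr rfl fun j _ =>
          Finset.sum_congr rfl fun s _ => Finset.sum_congr rfl fun t _ => ?_
        rw [hterm i j s t, Finset.sum_smul]
        refine Finset.sum_congr rfl fun r _ => ?_
        rw [Finset.sum_smul]
        refine Finset.sum_congr rfl fun c _ => ?_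
        rw [smul_smul]
    _ = ∑ r, ∑ c, ∑ s, ∑ t, ∑ i, ∑ j,
          (star (u (lam.k n)) p r * (u (lam.k n)) c q) •
          ((lam.map n (Matrix.single s t 1) (Matrix.single i j 1)) r c •
            φ (e s t) (f i j)) :=
        sum6_reorder fun i j s t r c =>
          (star (u (lam.k n)) p r * (u (lam.k n)) c q) •
          ((lam.map n (Matrix.single s t 1) (Matrix.single i j 1)) r c •
            φ (e s t) (f i j))
    _ = ∑ r, ∑ c, (star (u (lam.k n)) p r * (u (lam.k n)) c q) •
          bAmp lam φ e f r c := by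
        refine Finset.sum_congr rfl fun r _ => Finset.sum_congr rfl fun c _ => ?_
        have hb : bAmp lam φ e f r c = ∑ s, ∑ t, ∑ i, ∑ j,
            (lam.map n (Matrix.single s t 1) (Matrix.single i j 1)) r c •
              φ (e s t) (f i j) := rfl
        rw [hb]
        simp only [Finset.smul_sum]

end Flip

end WeightedCB

/-- If the bilinear weight `λ` is symmetric, i.e. there are unitaries
`u_k ∈ M_k(ℂ)` with `λₙ(b, a) = u_{k(n)}⁻¹ · λₙ(a, b) · u_{k(n)}`, then for any bilinear
map `φ : E × F → G` the flip `φ̄ : F × E → G` is λ-cb iff `φ` is, and `‖φ̄‖_λ = ‖φ‖_λ`. -/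
theorem bilCB_flip_of_symmetric {H₁ H₂ H₃ : Type*}
    [NormedAddCommGroup H₁] [InnerProductSpace ℂ H₁] [CompleteSpace H₁]
    [NormedAddCommGroup H₂] [InnerProductSpace ℂ H₂] [CompleteSpace H₂]
    [NormedAddCommGroup H₃] [InnerProductSpace ℂ H₃] [CompleteSpace H₃]
    (E : Submodule ℂ (H₁ →L[ℂ] H₁)) (hE : IsClosed (E : Set (H₁ →L[ℂ] H₁)))
    (F : Submodule ℂ (H₂ →L[ℂ] H₂)) (hF : IsClosed (F : Set (H₂ →L[ℂ] H₂)))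
    (G : Submodule ℂ (H₃ →L[ℂ] H₃)) (hG : IsClosed (G : Set (H₃ →L[ℂ] H₃)))
    (lam : WeightedCB.BilWeight)
    (u : ∀ k : ℕ, Matrix (Fin k) (Fin k) ℂ)
    (hu : ∀ k, u k ∈ Matrix.unitaryGroup (Fin k) ℂ)
    (hsym : ∀ n a b, lam.map n b a = (u (lam.k n))⁻¹ * lam.map n a b * u (lam.k n))
    (φ : ↥E →ₗ[ℂ] (↥F →ₗ[ℂ] (H₃ →L[ℂ] H₃))) (hφG : ∀ x y, φ x y ∈ G) :
    (WeightedCB.IsBilCB lam (fun y x => φ x y) ↔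
      WeightedCB.IsBilCB lam (fun x y => φ x y)) ∧
      WeightedCB.bilCbNorm lam (fun y x => φ x y) =
        WeightedCB.bilCbNorm lam (fun x y => φ x y) := by
  have key : ∀ (n : ℕ) (e : Matrix (Fin (n + 1)) (Fin (n + 1)) ↥E)
      (f : Matrix (Fin (n + 1)) (Fin (n + 1)) ↥F),
      WeightedCB.opMatNorm (WeightedCB.bAmp lam (fun y x => φ x y) f e) =
        WeightedCB.opMatNorm (WeightedCB.bAmp lam (fun x y => φ x y) e f) := by
    intro n e f
    rw [WeightedCB.bAmp_flip_eq_conj lam u hu hsym (fun x y => φ x y) e f]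
    exact WeightedCB.opMatNorm_conjMat (Unitary.mem_iff.mp (hu _)).1
      (Unitary.mem_iff.mp (hu _)).2 _
  constructor
  · constructor
    · rintro ⟨C, hC, h⟩
      refine ⟨C, hC, fun n e f => ?_⟩
      calc WeightedCB.opMatNorm (WeightedCB.bAmp lam (fun x y => φ x y) e f)
          = WeightedCB.opMatNorm (WeightedCB.bAmp lam (fun y x => φ x y) f e) :=
            (key n e f).symm
        _ ≤ C * (WeightedCB.subNorm f * WeightedCB.subNorm e) := h n f e
        _ = C * (WeightedCB.subNorm e * WeightedCB.subNorm f) := by ring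
    · rintro ⟨C, hC, h⟩
      refine ⟨C, hC, fun n f e => ?_⟩
      calc WeightedCB.opMatNorm (WeightedCB.bAmp lam (fun y x => φ x y) f e)
          = WeightedCB.opMatNorm (WeightedCB.bAmp lam (fun x y => φ x y) e f) :=
            key n e f
        _ ≤ C * (WeightedCB.subNorm e * WeightedCB.subNorm f) := h n e f
        _ = C * (WeightedCB.subNorm f * WeightedCB.subNorm e) := by ring
  · unfold WeightedCB.bilCbNorm
    congr 1
    ext C
    simp only [Set.mem_setOf_eq]
    constructor
    · rintro ⟨hC, h⟩
      refine ⟨hC, fun n e f => ?_⟩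
      calc WeightedCB.opMatNorm (WeightedCB.bAmp lam (fun x y => φ x y) e f)
          = WeightedCB.opMatNorm (WeightedCB.bAmp lam (fun y x => φ x y) f e) :=
            (key n e f).symm
        _ ≤ C * (WeightedCB.subNorm f * WeightedCB.subNorm e) := h n f e
        _ = C * (WeightedCB.subNorm e * WeightedCB.subNorm f) := by ring
    · rintro ⟨hC, h⟩
      refine ⟨hC, fun n f e => ?_⟩
      calc WeightedCB.opMatNorm (WeightedCB.bAmp lam (fun y x => φ x y) f e)
          = WeightedCB.opMatNorm (WeightedCB.bAmp lam (fun x y => φ x y) e f) :=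
            key n e f
        _ ≤ C * (WeightedCB.subNorm e * WeightedCB.subNorm f) := h n e f
        _ = C * (WeightedCB.subNorm f * WeightedCB.subNorm e) := by ring
end
end
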